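/- arXiv:1910.01771 — 2 statements merged into one kernel-verified Lean document; each statement's English description precedes it below -/
import Mathlib

section
/- Let λ∈ℂ with λ∉{2,5,6}. If f:{x1,x2,x3,x4,y0,y1,…,y6}→ℂ satisfies the eigenvalue equations −Δf(y_i)=λ f(y_i) for all 0≤i≤6, then −Δ_{(−1)}f(y0)=R(λ) f(y0), where R(λ)=λ(5−λ). -/
noncomputable section

namespace SGpaper

/-- The eleven vertices of the graph `Γ`. -/
inductive GammaV : Type
  | x1 | x2 | x3 | x4 | y0 | y1 | y2 | y3 | y4 | y5 | y6
  deriving DecidableEq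

instance instFintypeGammaV : Fintype GammaV where
  elems := {GammaV.x1, GammaV.x2, GammaV.x3, GammaV.x4, GammaV.y0, GammaV.y1, GammaV.y2,
    GammaV.y3, GammaV.y4, GammaV.y5, GammaV.y6}
  complete := by intro x; cases x <;> decide

open GammaV

/-- The six small triangles (cells) of `Γ`. -/
def cells : List (List GammaV) :=
  [[x1, y1, y5], [y1, y0, y4], [y5, y4, x4], [y0, y2, y3], [y2, x2, y6], [y3, y6, x3]]

/-- Adjacency in `Γ`: two distinct vertices lying in a common small triangle. -/
def adjG (a b : GammaV) : Prop :=
  a ≠ b ∧ ∃ c ∈ cells, a ∈ c ∧ b ∈ c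

instance : DecidableRel adjG := fun _ _ => by unfold adjG; infer_instance

/-- The graph Laplacian on `Γ`: `Δf(v) = Σ_{z ∼ v} f(z) - 4 f(v)`. -/
def laplG (f : GammaV → ℂ) (v : GammaV) : ℂ :=
  (∑ z ∈ Finset.univ.filter (fun z => adjG v z), f z) - 4 * f v

/-- The coarse Laplacian at `y₀`: `Δ_{(-1)}f(y₀) = f(x₁)+f(x₂)+f(x₃)+f(x₄) - 4 f(y₀)`. -/
def laplG1 (f : GammaV → ℂ) : ℂ :=
  f x1 + f x2 + f x3 + f x4 - 4 * f y0

/-- The list `y₀, y₁, …, y₆`. -/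
def yv : Fin 7 → GammaV
  | 0 => y0 | 1 => y1 | 2 => y2 | 3 => y3 | 4 => y4 | 5 => y5 | 6 => y6

/-- The list `x₁, …, x₄`. -/
def xv : Fin 4 → GammaV
  | 0 => x1 | 1 => x2 | 2 => x3 | 3 => x4

/-- The spectral decimation polynomial `R(λ) = λ(5-λ)`. -/
def R : ℂ → ℂ := fun z => z * (5 - z)

/-! Summing the eigenvalue equations over the orbits `{y₀}`, `{y₁,…,y₄}`, `{y₅,y₆}` of the
symmetries of `Γ` gives three linear relations between `f y₀`, the sums of `f` over
`{y₁,…,y₄}`, `{y₅,y₆}` and the corners `{x₁,…,x₄}`. Eliminating the two inner sums expresses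
the corner sum as `(1 - λ)(4 - λ) f y₀`, which is exactly `-Δ_{(-1)}f(y₀) = λ(5 - λ) f y₀`. -/

theorem laplG_y0 (f : GammaV → ℂ) : laplG f y0 = f y1 + f y2 + f y3 + f y4 - 4 * f y0 := by
  rw [laplG, show Finset.univ.filter (adjG y0) = {y1, y2, y3, y4} by decide]
  simp [add_assoc]

theorem laplG_y1 (f : GammaV → ℂ) : laplG f y1 = f x1 + f y0 + f y4 + f y5 - 4 * f y1 := by
  rw [laplG, show Finset.univ.filter (adjG y1) = {x1, y0, y4, y5} by decide]
  simp [add_assoc]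

theorem laplG_y2 (f : GammaV → ℂ) : laplG f y2 = f x2 + f y0 + f y3 + f y6 - 4 * f y2 := by
  rw [laplG, show Finset.univ.filter (adjG y2) = {x2, y0, y3, y6} by decide]
  simp [add_assoc]

theorem laplG_y3 (f : GammaV → ℂ) : laplG f y3 = f x3 + f y0 + f y2 + f y6 - 4 * f y3 := by
  rw [laplG, show Finset.univ.filter (adjG y3) = {x3, y0, y2, y6} by decide]
  simp [add_assoc]

theorem laplG_y4 (f : GammaV → ℂ) : laplG f y4 = f x4 + f y0 + f y1 + f y5 - 4 * f y4 := by
  rw [laplG, show Finset.univ.filter (adjG y4) = {x4, y0, y1, y5} by decide]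
  simp [add_assoc]

theorem laplG_y5 (f : GammaV → ℂ) : laplG f y5 = f x1 + f x4 + f y1 + f y4 - 4 * f y5 := by
  rw [laplG, show Finset.univ.filter (adjG y5) = {x1, x4, y1, y4} by decide]
  simp [add_assoc]

theorem laplG_y6 (f : GammaV → ℂ) : laplG f y6 = f x2 + f x3 + f y2 + f y3 - 4 * f y6 := by
  rw [laplG, show Finset.univ.filter (adjG y6) = {x2, x3, y2, y3} by decide]
  simp [add_assoc]

section Eigenfunction

variable {lam : ℂ} {f : GammaV → ℂ}

theorem sum_inner_eq (hf : ∀ i : Fin 7, -laplG f (yv i) = lam * f (yv i)) :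
    f y1 + f y2 + f y3 + f y4 = (4 - lam) * f y0 := by
  have h0 : -laplG f y0 = lam * f y0 := hf 0
  rw [laplG_y0] at h0
  linear_combination -h0

theorem sum_corners_eq (hf : ∀ i : Fin 7, -laplG f (yv i) = lam * f (yv i)) :
    f x1 + f x2 + f x3 + f x4 =
      (3 - lam) * (f y1 + f y2 + f y3 + f y4) - 4 * f y0 - 2 * (f y5 + f y6) := by
  have h1 : -laplG f y1 = lam * f y1 := hf 1
  have h2 : -laplG f y2 = lam * f y2 := hf 2
  have h3 : -laplG f y3 = lam * f y3 := hf 3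
  have h4 : -laplG f y4 = lam * f y4 := hf 4
  rw [laplG_y1] at h1
  rw [laplG_y2] at h2
  rw [laplG_y3] at h3
  rw [laplG_y4] at h4
  linear_combination -h1 - h2 - h3 - h4

theorem sum_outer_eq (hf : ∀ i : Fin 7, -laplG f (yv i) = lam * f (yv i)) (hlam : lam ≠ 6) :
    f y5 + f y6 = (2 - lam) * f y0 := by
  have h5 : -laplG f y5 = lam * f y5 := hf 5
  have h6 : -laplG f y6 = lam * f y6 := hf 6
  rw [laplG_y5] at h5
  rw [laplG_y6] at h6
  refine mul_left_cancel₀ (sub_ne_zero.mpr hlam.symm) ?_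
  linear_combination h5 + h6 + sum_corners_eq hf + (4 - lam) * sum_inner_eq hf

end Eigenfunction

open GammaV in
/-- Spectral decimation, forward direction. If `λ ∉ {2,5,6}` and
`f : Γ → ℂ` satisfies `-Δf(yᵢ) = λ f(yᵢ)` for all `0 ≤ i ≤ 6`, then
`-Δ_{(-1)}f(y₀) = R(λ) f(y₀)` where `R(λ) = λ(5-λ)`. -/
theorem decimation_forward (lam : ℂ) (hlam : lam ∉ ({2, 5, 6} : Set ℂ))
    (f : GammaV → ℂ) (hf : ∀ i : Fin 7, -laplG f (yv i) = lam * f (yv i)) :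
    -laplG1 f = R lam * f y0 := by
  have h6 : lam ≠ 6 := fun h => hlam (by simp [h])
  rw [laplG1, R]
  linear_combination -sum_corners_eq hf - (3 - lam) * sum_inner_eq hf + 2 * sum_outer_eq hf h6

end SGpaper
end
end

section
/- Let λ∈ℂ with λ∉{2,5,6}, and let R(λ)=λ(5−λ). For any prescribed complex values f(x1),f(x2),f(x3),f(x4),f(y0) satisfying −Δ_{(−1)}f(y0)=R(λ) f(y0), there exist unique complex values f(y1),…,f(y6) such that the extended function f on Γ satisfies −Δf(y_i)=λ f(y_i) for all 0≤i≤6. -/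
/-!
On each of the two subdivided triangles of `Γ`, the eigenvalue equations at the three midpoints
form a linear system whose matrix `(5 - λ) I - J` has eigenvalues `5 - λ` and `2 - λ`; for
`λ ∉ {2, 5}` it is invertible and the midpoint values are explicit functions of the corners.
It remains to check the equation at `y₀`, which is where the decimation relation
`-Δ_{(-1)} f(y₀) = R(λ) f(y₀)` enters.
-/

noncomputable section

namespace SGpaper

instance : Fintype GammaV :=
  ⟨{GammaV.x1, GammaV.x2, GammaV.x3, GammaV.x4, GammaV.y0, GammaV.y1, GammaV.y2, GammaV.y3,
    GammaV.y4, GammaV.y5, GammaV.y6}, fun x => by cases x <;> decide⟩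

open GammaV

open Finset

theorem neg_laplG_eq_mul_iff {v a b c d : GammaV} (hN : univ.filter (adjG v) = {a, b, c, d})
    (hnd : [a, b, c, d].Nodup) (f : GammaV → ℂ) (lam : ℂ) :
    -laplG f v = lam * f v ↔ (4 - lam) * f v = f a + f b + f c + f d := by
  simp only [List.nodup_cons, List.mem_cons, List.not_mem_nil, or_false, not_or] at hnd
  obtain ⟨⟨hab, hac, had⟩, ⟨hbc, hbd⟩, hcd, -⟩ := hnd
  rw [laplG, hN, sum_insert (by simp [hab, hac, had]), sum_insert (by simp [hbc, hbd]),
    sum_pair hcd]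
  constructor <;> intro h <;> linear_combination h

theorem forall_neg_laplG_yv_iff (f : GammaV → ℂ) (lam : ℂ) :
    (∀ i : Fin 7, -laplG f (yv i) = lam * f (yv i)) ↔
      (4 - lam) * f y0 = f y1 + f y2 + f y3 + f y4 ∧
      ((4 - lam) * f y1 = f x1 + f y0 + f y4 + f y5 ∧
        (4 - lam) * f y4 = f y0 + f x4 + f y5 + f y1 ∧
        (4 - lam) * f y5 = f x4 + f x1 + f y1 + f y4) ∧
      ((4 - lam) * f y2 = f y0 + f x2 + f y6 + f y3 ∧
        (4 - lam) * f y6 = f x2 + f x3 + f y3 + f y2 ∧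
        (4 - lam) * f y3 = f x3 + f y0 + f y2 + f y6) := by
  simp only [Fin.forall_fin_succ, IsEmpty.forall_iff, and_true, yv]
  rw [neg_laplG_eq_mul_iff (a := y1) (b := y2) (c := y3) (d := y4) (by decide) (by decide),
    neg_laplG_eq_mul_iff (a := x1) (b := y0) (c := y4) (d := y5) (by decide) (by decide),
    neg_laplG_eq_mul_iff (a := y0) (b := x2) (c := y6) (d := y3) (by decide) (by decide),
    neg_laplG_eq_mul_iff (a := x3) (b := y0) (c := y2) (d := y6) (by decide) (by decide),
    neg_laplG_eq_mul_iff (a := y0) (b := x4) (c := y5) (d := y1) (by decide) (by decide),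
    neg_laplG_eq_mul_iff (a := x4) (b := x1) (c := y1) (d := y4) (by decide) (by decide),
    neg_laplG_eq_mul_iff (a := x2) (b := x3) (c := y3) (d := y2) (by decide) (by decide)]
  tauto

section SubdividedTriangle

variable {lam : ℂ}

def midValue (lam p q r : ℂ) : ℂ :=
  ((4 - lam) * (p + q) + 2 * r) / ((2 - lam) * (5 - lam))

/-- `w, u, v` are the values at the midpoints of the sides `pq, qr, rp` of a subdivided
triangle with corner values `p, q, r`. -/
theorem midpoint_eigen_iff (hD : (2 - lam) * (5 - lam) ≠ 0) (p q r u v w : ℂ) :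
    ((4 - lam) * w = p + q + u + v ∧ (4 - lam) * u = q + r + v + w ∧
        (4 - lam) * v = r + p + w + u) ↔
      w = midValue lam p q r ∧ u = midValue lam q r p ∧ v = midValue lam r p q := by
  simp only [midValue, eq_div_iff hD]
  constructor
  · rintro ⟨hw, hu, hv⟩
    exact ⟨by linear_combination (3 - lam) * hw + hu + hv,
      by linear_combination hw + (3 - lam) * hu + hv,
      by linear_combination hw + hu + (3 - lam) * hv⟩
  · rintro ⟨hw, hu, hv⟩
    refine ⟨mul_left_cancel₀ hD ?_, mul_left_cancel₀ hD ?_, mul_left_cancel₀ hD ?_⟩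
    · linear_combination (4 - lam) * hw - hu - hv
    · linear_combination (4 - lam) * hu - hv - hw
    · linear_combination (4 - lam) * hv - hw - hu

end SubdividedTriangle

def decimationExtension (lam a b c d e : ℂ) : GammaV → ℂ
  | x1 => a | x2 => b | x3 => c | x4 => d | y0 => e
  | y1 => midValue lam a e d | y4 => midValue lam e d a | y5 => midValue lam d a e
  | y2 => midValue lam e b c | y6 => midValue lam b c e | y3 => midValue lam c e b

open GammaV in
/-- Spectral decimation, extension. Let `λ ∉ {2,5,6}`. For any prescribed
values `a = f(x₁), b = f(x₂), c = f(x₃), d = f(x₄), e = f(y₀)` with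
`-Δ_{(-1)}f(y₀) = R(λ) f(y₀)`, there is a unique extension `f : Γ → ℂ` satisfying
`-Δf(yᵢ) = λ f(yᵢ)` for all `0 ≤ i ≤ 6`. -/
theorem decimation_extension (lam : ℂ) (hlam : lam ∉ ({2, 5, 6} : Set ℂ))
    (a b c d e : ℂ) (h : -(a + b + c + d - 4 * e) = R lam * e) :
    ∃! f : GammaV → ℂ,
      (f x1 = a ∧ f x2 = b ∧ f x3 = c ∧ f x4 = d ∧ f y0 = e) ∧
      ∀ i : Fin 7, -laplG f (yv i) = lam * f (yv i) := by
  have h2 : lam ≠ 2 := fun h2 => hlam (by simp [h2])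
  have h5 : lam ≠ 5 := fun h5 => hlam (by simp [h5])
  have hD : (2 - lam) * (5 - lam) ≠ 0 :=
    mul_ne_zero (sub_ne_zero.2 h2.symm) (sub_ne_zero.2 h5.symm)
  refine ⟨decimationExtension lam a b c d e, ⟨⟨rfl, rfl, rfl, rfl, rfl⟩, ?_⟩, ?_⟩
  · rw [forall_neg_laplG_yv_iff]
    refine ⟨?_, (midpoint_eigen_iff hD ..).2 ⟨rfl, rfl, rfl⟩,
      (midpoint_eigen_iff hD ..).2 ⟨rfl, rfl, rfl⟩⟩
    -- the neighbours of `y₀` sum to `((6 - λ)(a + b + c + d) + 4(4 - λ)e) / ((2 - λ)(5 - λ))`,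
    -- and `(6 - λ)(λ - 1)(λ - 4) + 4(4 - λ) = (4 - λ)(2 - λ)(5 - λ)`
    simp only [decimationExtension, midValue, R] at h ⊢
    field_simp
    linear_combination (6 - lam) * h
  · rintro g ⟨⟨rfl, rfl, rfl, rfl, rfl⟩, hg⟩
    obtain ⟨-, hl, hr⟩ := (forall_neg_laplG_yv_iff g lam).1 hg
    obtain ⟨hy1, hy4, hy5⟩ := (midpoint_eigen_iff hD ..).1 hl
    obtain ⟨hy2, hy6, hy3⟩ := (midpoint_eigen_iff hD ..).1 hr
    funext v
    cases v <;> first | rfl | assumption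

end SGpaper
end
end
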